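/- arXiv:1212.1351 — 5 statements merged into one kernel-verified Lean document; each statement's English description precedes it below -/
import Mathlib

section
/- Let B be the 3×3 integer matrix with rows (0,2,−2), (−2,0,2), (2,−2,0), and let v = (1,−1,0). Suppose (v_i)_{i∈S} is a finite family of nonzero integer vectors lying in the plane {(x,y,z) : x+y+z = 0}, none of which is a nonnegative scalar multiple of v. If c and (c_i)_{i∈S} are integers such that c·v + ∑_{i∈S} c_i v_i is a B-coherent linear relation over ℤ, then c = 0. -/
open scoped BigOperators

/-- Matrix mutation `μ_k`. -/
def matMut (k : Fin 3) (C : Matrix (Fin 3) (Fin 3) ℤ) : Matrix (Fin 3) (Fin 3) ℤ :=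
  Matrix.of fun i j =>
    if i = k ∨ j = k then -C i j
    else C i j + Int.sign (C k j) * max (C i k * C k j) 0

/-- The mutation map `η_k^C : ℝ³ → ℝ³`. -/
noncomputable def etaMap (C : Matrix (Fin 3) (Fin 3) ℤ) (k : Fin 3) (a : Fin 3 → ℝ) :
    Fin 3 → ℝ := fun j =>
  if j = k then -a k
  else if 0 ≤ a k ∧ 0 ≤ C k j then a j + a k * (C k j : ℝ)
  else if a k ≤ 0 ∧ C k j ≤ 0 then a j - a k * (C k j : ℝ)
  else a j

/-- The mutation map for a finite sequence of indices; the list records the order of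
application, so `etaList C [k₁, …, k_q] = η_{k_q} ∘ ⋯ ∘ η_{k₁}`, where the matrix is
mutated along the way. -/
noncomputable def etaList (C : Matrix (Fin 3) (Fin 3) ℤ) :
    List (Fin 3) → (Fin 3 → ℝ) → (Fin 3 → ℝ)
  | [] => id
  | k :: ks => fun a => etaList (matMut k C) ks (etaMap C k a)

/-- The exchange matrix `B` of the once-punctured torus. -/
def Bmat : Matrix (Fin 3) (Fin 3) ℤ := !![0, 2, -2; -2, 0, 2; 2, -2, 0]

/-- Componentwise minimum with `0`. -/
noncomputable def minZero (v : Fin 3 → ℝ) : Fin 3 → ℝ := fun j => min (v j) 0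

/-- The formal expression `∑ i ∈ S, c i • v i` is a `C`-coherent linear relation. -/
def BCoherent {ι : Type*} (C : Matrix (Fin 3) (Fin 3) ℤ) (S : Finset ι)
    (c : ι → ℝ) (v : ι → Fin 3 → ℝ) : Prop :=
  ∀ ks : List (Fin 3),
    ∑ i ∈ S, c i • etaList C ks (v i) = 0 ∧
    ∑ i ∈ S, c i • minZero (etaList C ks (v i)) = 0


/-!
Write a vector of the plane `x + y + z = 0` as `(x, -x - z, z)` with `(x, z) ∈ ℤ²`. Mutating `B`
at `0` and then at `1` (or at `1` and then at `0`) gives back `B`, so along the sequences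
`0, 1, 0, 1, …` and `1, 0, 1, 0, …` the mutation maps act on the plane as the iterates of a
piecewise-linear map `phi` of `ℤ²` and of its inverse. The ray through `v = (1, 0)` consists of
fixed points of `phi`; every other lattice point eventually enters the region `x ≥ 0, z = -t < 0`,
where `phi` is the translation by `(2t, 0)`. Hence for large `n` the forward orbit of `w_i` is
`(a_i + 2 t_i n, -t_i)` and the backward one is `(-a_i - 2 t_i + 2 t_i n, t_i)`, while `v` stays
put. The `z`-coordinates of the relation give `∑ c_i t_i = 0`, and the sum of the two
`x`-coordinates gives `2 c + (4 n - 2) ∑ c_i t_i = 0`, so `c = 0`.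
-/

open Filter Function

namespace OncePuncturedTorus

theorem etaList_flatten_replicate {C : Matrix (Fin 3) (Fin 3) ℤ} {k l : Fin 3}
    (hC : matMut l (matMut k C) = C) (n : ℕ) :
    etaList C (List.replicate n [k, l]).flatten = (etaList C [k, l])^[n] := by
  induction n with
  | zero => rfl
  | succ n ih =>
    funext a
    rw [List.replicate_succ, List.flatten_cons, iterate_succ_apply, ← ih]
    show etaList (matMut l (matMut k C)) _ _ = _
    rw [hC]
    rfl

theorem matMut_zero_Bmat : matMut 0 Bmat = -Bmat := by decide

theorem matMut_one_Bmat : matMut 1 Bmat = -Bmat := by decide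

theorem matMut_one_matMut_zero_Bmat : matMut 1 (matMut 0 Bmat) = Bmat := by decide

theorem matMut_zero_matMut_one_Bmat : matMut 0 (matMut 1 Bmat) = Bmat := by decide

noncomputable def planeVec : ℤ × ℤ →+ Fin 3 → ℝ where
  toFun p := ![(p.1 : ℝ), -p.1 - p.2, p.2]
  map_zero' := by ext j; fin_cases j <;> simp
  map_add' p q := by ext j; fin_cases j <;> simp; ring

@[simp]
theorem planeVec_apply (p : ℤ × ℤ) : planeVec p = ![(p.1 : ℝ), -p.1 - p.2, p.2] := rfl

theorem planeVec_injective : Injective planeVec := by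
  intro p q h
  have h0 := congrFun h 0
  have h2 := congrFun h 2
  simp only [planeVec_apply, Matrix.cons_val_zero, Matrix.cons_val_two, Matrix.tail_cons,
    Matrix.head_cons, Int.cast_inj] at h0 h2
  exact Prod.ext h0 h2

def phi (p : ℤ × ℤ) : ℤ × ℤ :=
  if 0 ≤ p.1 then
    if p.2 ≤ p.1 then (p.1 - 2 * p.2, p.2) else (-p.1, 2 * p.1 - p.2)
  else
    if p.1 + p.2 ≤ 0 then (-3 * p.1 - 2 * p.2, 2 * p.1 + p.2) else (-p.1, -p.2)

/- In the coordinates `(x, z)`, `reflect` swaps the indices `0, 1` and negates. This turns `B`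
into `-B`, and `η^{-B}(-a) = -η^B(a)`, which is why `phiInv` is the action of `η` along `1, 0`. -/
def reflect (p : ℤ × ℤ) : ℤ × ℤ := (p.1 + p.2, -p.2)

def phiInv (p : ℤ × ℤ) : ℤ × ℤ := reflect (phi (reflect p))

theorem reflect_involutive : Involutive reflect := fun p => by simp [reflect]

theorem phiInv_leftInverse : LeftInverse phiInv phi := by
  rintro ⟨x, z⟩
  simp only [phiInv, phi, reflect]
  split_ifs <;> ext <;> dsimp only <;> omega

theorem phiInv_iterate (n : ℕ) (p : ℤ × ℤ) : phiInv^[n] p = reflect (phi^[n] (reflect p)) := by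
  have hconj : Semiconj reflect phiInv phi := fun p => reflect_involutive _
  rw [← (hconj.iterate_right n) p, reflect_involutive]

theorem etaList_zero_one_planeVec (p : ℤ × ℤ) :
    etaList Bmat [0, 1] (planeVec p) = planeVec (phi p) := by
  obtain ⟨x, z⟩ := p
  simp only [etaList, matMut_zero_Bmat, id]
  ext j
  fin_cases j <;> simp [etaMap, Bmat, phi] <;> split_ifs <;> dsimp only at * <;> rify at * <;>
    linarith

theorem etaList_one_zero_planeVec (p : ℤ × ℤ) :
    etaList Bmat [1, 0] (planeVec p) = planeVec (phiInv p) := by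
  obtain ⟨x, z⟩ := p
  simp only [etaList, matMut_one_Bmat, id]
  ext j
  fin_cases j <;> simp [etaMap, Bmat, phiInv, phi, reflect] <;> split_ifs <;> dsimp only at * <;>
    rify at * <;> linarith

theorem etaList_zero_one_iterate (n : ℕ) (p : ℤ × ℤ) :
    etaList Bmat (List.replicate n [0, 1]).flatten (planeVec p) = planeVec (phi^[n] p) := by
  rw [etaList_flatten_replicate matMut_one_matMut_zero_Bmat]
  exact ((Semiconj.iterate_right (fun q => (etaList_zero_one_planeVec q).symm) n) p).symm

theorem etaList_one_zero_iterate (n : ℕ) (p : ℤ × ℤ) :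
    etaList Bmat (List.replicate n [1, 0]).flatten (planeVec p) = planeVec (phiInv^[n] p) := by
  rw [etaList_flatten_replicate matMut_zero_matMut_one_Bmat]
  exact ((Semiconj.iterate_right (fun q => (etaList_one_zero_planeVec q).symm) n) p).symm

theorem phi_iterate_translate {A t : ℤ} (hA : 0 ≤ A) (ht : 0 < t) (m : ℕ) :
    phi^[m] (A, -t) = (A + 2 * t * m, -t) := by
  induction m with
  | zero => simp
  | succ m ih =>
    have hm : 0 ≤ 2 * t * (m : ℤ) := by positivity
    rw [iterate_succ_apply', ih, phi, if_pos (by omega), if_pos (by omega)]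
    exact Prod.ext (by push_cast; ring) rfl

theorem eventually_phi_iterate_of_iterate_eq {p : ℤ × ℤ} {N : ℕ} {A t : ℤ} (hA : 0 ≤ A)
    (ht : 0 < t) (hN : phi^[N] p = (A, -t)) :
    ∀ᶠ n : ℕ in atTop, phi^[n] p = (A - 2 * t * N + 2 * t * n, -t) := by
  refine eventually_atTop.2 ⟨N, fun n hn => ?_⟩
  obtain ⟨k, rfl⟩ := Nat.exists_eq_add_of_le hn
  rw [add_comm, iterate_add_apply, hN, phi_iterate_translate hA ht]
  exact Prod.ext (by push_cast; ring) rfl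

theorem exists_phi_iterate_of_pos {x z : ℤ} (hz : 0 < z) (hx : -z ≤ x) :
    ∃ N : ℕ, 0 ≤ -x - 2 * z + 2 * z * N ∧ phi^[N] (x, z) = (-x - 2 * z + 2 * z * N, -z) := by
  by_cases hzx : z ≤ x
  · obtain ⟨N, hN, hphiN⟩ := exists_phi_iterate_of_pos (x := x - 2 * z) hz (by omega)
    have hphi : phi (x, z) = (x - 2 * z, z) := by simp [phi, hzx, hz.le.trans hzx]
    refine ⟨N + 1, by push_cast; linarith, ?_⟩
    rw [iterate_succ_apply, hphi, hphiN]
    exact Prod.ext (by push_cast; ring) rfl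
  · by_cases hx0 : 0 < x
    · have hphi2 : phi^[2] (x, z) = (2 * z - x, -z) := by
        simp only [iterate_succ, iterate_zero, comp_apply, id, phi]
        split_ifs <;> ext <;> dsimp only <;> omega
      exact ⟨2, by push_cast; linarith, by rw [hphi2]; exact Prod.ext (by push_cast; ring) rfl⟩
    · have hphi : phi (x, z) = (-x, -z) := by
        simp only [phi]
        split_ifs <;> ext <;> dsimp only <;> omega
      exact ⟨1, by push_cast; linarith, by rw [iterate_one, hphi]; exact Prod.ext (by ring) rfl⟩
termination_by x.toNat
decreasing_by omega

theorem eventually_phi_iterate_of_pos {x z : ℤ} (hz : 0 < z) (hx : -z ≤ x) :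
    ∀ᶠ n : ℕ in atTop, phi^[n] (x, z) = (-x - 2 * z + 2 * z * n, -z) := by
  obtain ⟨N, hA, hN⟩ := exists_phi_iterate_of_pos hz hx
  filter_upwards [eventually_phi_iterate_of_iterate_eq hA hz hN] with n hn
  rw [hn]
  exact Prod.ext (by ring) rfl

theorem exists_phi_iterate_eq {p : ℤ × ℤ} (hp : ¬(p.2 = 0 ∧ 0 ≤ p.1)) :
    ∃ (N : ℕ) (A t : ℤ), 0 ≤ A ∧ 0 < t ∧ phi^[N] p = (A, -t) := by
  obtain ⟨x, z⟩ := p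
  dsimp only at hp
  by_cases hx : 0 ≤ x
  · rcases lt_trichotomy z 0 with hz | rfl | hz
    · exact ⟨0, x, -z, hx, by omega, by simp⟩
    · exact absurd ⟨rfl, hx⟩ hp
    · obtain ⟨N, hA, hN⟩ := exists_phi_iterate_of_pos (x := x) hz (by omega)
      exact ⟨N, _, z, hA, hz, hN⟩
  · by_cases hxz : x + z ≤ 0
    · have hphi : phi (x, z) = (-3 * x - 2 * z, 2 * x + z) := by simp [phi, hx, hxz]
      exact ⟨1, -3 * x - 2 * z, -(2 * x + z), by omega, by omega, by simp [hphi]⟩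
    · obtain ⟨N, hA, hN⟩ := exists_phi_iterate_of_pos (x := x) (z := z) (by omega) (by omega)
      exact ⟨N, _, z, hA, by omega, hN⟩

theorem eventually_phi_iterate_and_phiInv_iterate {p : ℤ × ℤ} (hp : ¬(p.2 = 0 ∧ 0 ≤ p.1)) :
    ∃ a t : ℤ, ∀ᶠ n : ℕ in atTop,
      phi^[n] p = (a + 2 * t * n, -t) ∧ phiInv^[n] p = (-a - 2 * t + 2 * t * n, t) := by
  obtain ⟨N, A, t, hA, ht, hN⟩ := exists_phi_iterate_eq hp
  have hp : p = phiInv^[N] (A, -t) := by rw [← hN, (phiInv_leftInverse.iterate N) p]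
  have hbwd := (tendsto_add_atTop_nat N).eventually
    (eventually_phi_iterate_of_pos (x := A - t) ht (by omega))
  refine ⟨A - 2 * t * N, t, (eventually_phi_iterate_of_iterate_eq hA ht hN).and ?_⟩
  filter_upwards [hbwd] with n hn
  rw [hp, ← iterate_add_apply, phiInv_iterate, show reflect (A, -t) = (A - t, t) by
    simp [reflect, sub_eq_add_neg], hn]
  simp only [reflect, Prod.mk.injEq]
  push_cast
  constructor <;> ring

theorem exists_eq_planeVec {w : Fin 3 → ℝ} (hint : ∃ u : Fin 3 → ℤ, w = fun j => (u j : ℝ))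
    (hplane : w 0 + w 1 + w 2 = 0) (hnotv : ¬∃ t : ℝ, 0 ≤ t ∧ w = t • ![(1 : ℝ), -1, 0]) :
    ∃ p : ℤ × ℤ, ¬(p.2 = 0 ∧ 0 ≤ p.1) ∧ w = planeVec p := by
  obtain ⟨u, rfl⟩ := hint
  have hw : (fun j => (u j : ℝ)) = planeVec (u 0, u 2) := by
    ext j
    fin_cases j <;> simp
    linarith
  refine ⟨(u 0, u 2), fun ⟨(hz : u 2 = 0), (hx : 0 ≤ u 0)⟩ =>
    hnotv ⟨u 0, by exact_mod_cast hx, ?_⟩, hw⟩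
  rw [hw]
  ext j
  fin_cases j <;> simp [hz]

theorem zsmul_add_sum_eq_zero_of_planeVec {ι : Type*} {S : Finset ι} {c : ℤ} {cc : ι → ℤ}
    {p : ℤ × ℤ} {q : ι → ℤ × ℤ}
    (h : (c : ℝ) • planeVec p + ∑ i ∈ S, (cc i : ℝ) • planeVec (q i) = 0) :
    c • p + ∑ i ∈ S, cc i • q i = 0 := by
  simp only [Int.cast_smul_eq_zsmul ℝ, ← map_zsmul, ← map_sum, ← map_add] at h
  exact planeVec_injective (h.trans (map_zero planeVec).symm)

theorem eq_zero_of_translation_relations {ι : Type*} (S : Finset ι) (c : ℤ) (cc a t : ι → ℤ)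
    (n : ℤ) (hfwd : c • ((1 : ℤ), (0 : ℤ)) + ∑ i ∈ S, cc i • (a i + 2 * t i * n, -t i) = 0)
    (hbwd : c • ((1 : ℤ), (0 : ℤ)) + ∑ i ∈ S, cc i • (-a i - 2 * t i + 2 * t i * n, t i) = 0) :
    c = 0 := by
  have h1 := congrArg Prod.fst hfwd
  have h2 := congrArg Prod.snd hfwd
  have h3 := congrArg Prod.fst hbwd
  simp only [Prod.fst_add, Prod.snd_add, Prod.fst_sum, Prod.snd_sum, Prod.smul_fst, Prod.smul_snd,
    smul_eq_mul, mul_one, mul_zero, zero_add, Prod.fst_zero, Prod.snd_zero] at h1 h2 h3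
  have hsum : ∑ i ∈ S, cc i * (a i + 2 * t i * n) + ∑ i ∈ S, cc i * (-a i - 2 * t i + 2 * t i * n)
      = (2 - 4 * n) * ∑ i ∈ S, cc i * -t i := by
    rw [← Finset.sum_add_distrib, Finset.mul_sum]
    exact Finset.sum_congr rfl fun i _ => by ring
  rw [h2, mul_zero] at hsum
  linarith

end OncePuncturedTorus

open OncePuncturedTorus

theorem statement5_general {ι : Type} (S : Finset ι) (w : ι → Fin 3 → ℝ)
    (hint : ∀ i ∈ S, ∃ u : Fin 3 → ℤ, w i = fun j => ((u j : ℝ)))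
    (hplane : ∀ i ∈ S, w i 0 + w i 1 + w i 2 = 0)
    (hnotv : ∀ i ∈ S, ¬∃ t : ℝ, 0 ≤ t ∧ w i = t • ![(1 : ℝ), -1, 0])
    (c : ℤ) (cc : ι → ℤ)
    (hrel : ∀ ks : List (Fin 3),
      ((c : ℝ) • etaList Bmat ks ![(1 : ℝ), -1, 0] +
        ∑ i ∈ S, (cc i : ℝ) • etaList Bmat ks (w i) = 0) ∧
      ((c : ℝ) • minZero (etaList Bmat ks ![(1 : ℝ), -1, 0]) +
        ∑ i ∈ S, (cc i : ℝ) • minZero (etaList Bmat ks (w i)) = 0)) :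
    c = 0 := by
  choose! p hp hwp using fun i hi => exists_eq_planeVec (hint i hi) (hplane i hi) (hnotv i hi)
  choose! a t ha using fun i hi => eventually_phi_iterate_and_phiInv_iterate (hp i hi)
  obtain ⟨n, hn⟩ := ((eventually_all_finset S).2 ha).exists
  have hv : ![(1 : ℝ), -1, 0] = planeVec (1, 0) := by ext j; fin_cases j <;> simp
  have hphi : phi (1, 0) = (1, 0) := by decide
  have hphiInv : phiInv (1, 0) = (1, 0) := by decide
  have hfwd : ∀ i ∈ S, (cc i : ℝ) • etaList Bmat (List.replicate n [0, 1]).flatten (w i) =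
      (cc i : ℝ) • planeVec (a i + 2 * t i * n, -t i) := fun i hi => by
    rw [hwp i hi, etaList_zero_one_iterate, (hn i hi).1]
  have hbwd : ∀ i ∈ S, (cc i : ℝ) • etaList Bmat (List.replicate n [1, 0]).flatten (w i) =
      (cc i : ℝ) • planeVec (-a i - 2 * t i + 2 * t i * n, t i) := fun i hi => by
    rw [hwp i hi, etaList_one_zero_iterate, (hn i hi).2]
  have hrel_fwd := (hrel (List.replicate n [0, 1]).flatten).1
  have hrel_bwd := (hrel (List.replicate n [1, 0]).flatten).1
  rw [hv, etaList_zero_one_iterate, iterate_fixed hphi, Finset.sum_congr rfl hfwd] at hrel_fwd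
  rw [hv, etaList_one_zero_iterate, iterate_fixed hphiInv, Finset.sum_congr rfl hbwd] at hrel_bwd
  exact eq_zero_of_translation_relations S c cc a t n
    (zsmul_add_sum_eq_zero_of_planeVec hrel_fwd) (zsmul_add_sum_eq_zero_of_planeVec hrel_bwd)

/-- If `c • (1,-1,0) + ∑ cᵢ • vᵢ` is a `B`-coherent linear relation, where the `vᵢ` are
nonzero integer vectors in the plane `x+y+z = 0`, none a nonnegative multiple of
`(1,-1,0)`, then `c = 0`. -/
theorem statement5 {ι : Type} (S : Finset ι) (w : ι → Fin 3 → ℝ)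
    (hint : ∀ i ∈ S, ∃ u : Fin 3 → ℤ, w i = fun j => ((u j : ℝ)))
    (hne : ∀ i ∈ S, w i ≠ 0)
    (hplane : ∀ i ∈ S, w i 0 + w i 1 + w i 2 = 0)
    (hnotv : ∀ i ∈ S, ¬∃ t : ℝ, 0 ≤ t ∧ w i = t • ![(1 : ℝ), -1, 0])
    (c : ℤ) (cc : ι → ℤ)
    (hrel : ∀ ks : List (Fin 3),
      ((c : ℝ) • etaList Bmat ks ![(1 : ℝ), -1, 0] +
        ∑ i ∈ S, (cc i : ℝ) • etaList Bmat ks (w i) = 0) ∧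
      ((c : ℝ) • minZero (etaList Bmat ks ![(1 : ℝ), -1, 0]) +
        ∑ i ∈ S, (cc i : ℝ) • minZero (etaList Bmat ks (w i)) = 0)) :
    c = 0 :=
  statement5_general S w hint hplane hnotv c cc hrel
end

section
/- If three Farey points in ℤ² are pairwise Farey neighbors, then they do not lie on a common affine line in ℝ² (i.e., they are not collinear). -/
/-!
Write `u × v = u₁v₂ - u₂v₁`. Collinearity of `p, q, r` means `(q - p) × (r - p) = 0`, and
expanding gives `(q - p) × (r - p) = p × q + q × r - p × r`. For pairwise Farey neighbors each of
the three terms is `±1`, so the sum is odd and cannot vanish.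
-/

open scoped BigOperators

/-- A Farey point: an integer vector `(a,b)` with `gcd(a,b) = 1`. -/
def FareyPoint (p : ℤ × ℤ) : Prop := Int.gcd p.1 p.2 = 1

/-- Farey neighbors: first coordinates weakly of the same sign, second coordinates
weakly of the same sign, and `ad - bc = ±1`. -/
def FareyNeighbors (p q : ℤ × ℤ) : Prop :=
  ((0 ≤ p.1 ∧ 0 ≤ q.1) ∨ (p.1 ≤ 0 ∧ q.1 ≤ 0)) ∧
  ((0 ≤ p.2 ∧ 0 ≤ q.2) ∨ (p.2 ≤ 0 ∧ q.2 ≤ 0)) ∧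
  (p.1 * q.2 - p.2 * q.1 = 1 ∨ p.1 * q.2 - p.2 * q.1 = -1)

/-- The inclusion of `ℤ²` into `ℝ²`. -/
def toR2 (p : ℤ × ℤ) : ℝ × ℝ := ((p.1 : ℝ), (p.2 : ℝ))

def cross {R : Type*} [CommRing R] (u v : R × R) : R := u.1 * v.2 - u.2 * v.1

theorem cross_smul_smul {R : Type*} [CommRing R] (s t : R) (v : R × R) :
    cross (s • v) (t • v) = 0 := by
  simp only [cross, Prod.smul_fst, Prod.smul_snd, smul_eq_mul]
  ring

theorem cross_sub_sub_eq_zero_of_collinear {K : Type*} [Field K] {a b c : K × K}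
    (h : Collinear K ({a, b, c} : Set (K × K))) : cross (b - a) (c - a) = 0 := by
  obtain ⟨v, hv⟩ := (collinear_iff_of_mem (Set.mem_insert a _)).1 h
  obtain ⟨s, rfl⟩ := hv b (by simp)
  obtain ⟨t, rfl⟩ := hv c (by simp)
  simpa only [vadd_eq_add, add_sub_cancel_right] using cross_smul_smul s t v

theorem cross_sub_sub {R : Type*} [CommRing R] (p q r : R × R) :
    cross (q - p) (r - p) = cross p q + cross q r - cross p r := by
  simp only [cross, Prod.fst_sub, Prod.snd_sub]
  ring

theorem toR2_sub (p q : ℤ × ℤ) : toR2 (p - q) = toR2 p - toR2 q := by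
  simp [toR2]

theorem cross_toR2 (u v : ℤ × ℤ) : cross (toR2 u) (toR2 v) = ((cross u v : ℤ) : ℝ) := by
  simp [cross, toR2]

theorem FareyNeighbors.odd_cross {p q : ℤ × ℤ} (h : FareyNeighbors p q) : Odd (cross p q) := by
  rcases h.2.2 with h | h <;> simp [cross, h]

theorem statement9_general (p q r : ℤ × ℤ) (hpq : FareyNeighbors p q) (hpr : FareyNeighbors p r)
    (hqr : FareyNeighbors q r) :
    ¬Collinear ℝ ({toR2 p, toR2 q, toR2 r} : Set (ℝ × ℝ)) := by
  intro h
  have hzero := cross_sub_sub_eq_zero_of_collinear h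
  rw [← toR2_sub, ← toR2_sub, cross_toR2, Int.cast_eq_zero, cross_sub_sub] at hzero
  have hodd : Odd (cross p q + cross q r - cross p r) :=
    (hpq.odd_cross.add_odd hqr.odd_cross).sub_odd hpr.odd_cross
  simp [hzero] at hodd

/-- Three pairwise Farey neighbor Farey points are not collinear. -/
theorem statement9 (p q r : ℤ × ℤ) (hp : FareyPoint p) (hq : FareyPoint q)
    (hr : FareyPoint r) (hpq : FareyNeighbors p q) (hpr : FareyNeighbors p r)
    (hqr : FareyNeighbors q r) :
    ¬Collinear ℝ ({toR2 p, toR2 q, toR2 r} : Set (ℝ × ℝ)) :=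
  statement9_general p q r hpq hpr hqr
end

section
/- Every point (a,b) ∈ ℝ² with b ≥ 1 is contained in some Farey triangle or in some Farey ray. -/
open scoped BigOperators

/-- A Farey triangle: the convex hull of three pairwise Farey neighbor Farey points. -/
def IsFareyTriangle (T : Set (ℝ × ℝ)) : Prop :=
  ∃ p q r : ℤ × ℤ, FareyPoint p ∧ FareyPoint q ∧ FareyPoint r ∧
    FareyNeighbors p q ∧ FareyNeighbors p r ∧ FareyNeighbors q r ∧
    T = convexHull ℝ {toR2 p, toR2 q, toR2 r}

/-- The Farey ray with vertex the Farey point `p`: the set `{c • p : c ≥ 1}`. -/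
def fareyRay (p : ℤ × ℤ) : Set (ℝ × ℝ) := {x | ∃ c : ℝ, 1 ≤ c ∧ x = c • toR2 p}

/-!
Write `x = α p + β q` with `p, q` Farey neighbors and `α, β ≥ 0`, `α + β ≥ 1`; initially
`p = (0,1)`, `q = (±1,0)`. If `α, β ≤ 1`, then `x` lies in the triangle `p, q, p + q`. If one
coefficient vanishes, `x` lies on a Farey ray. Otherwise, with `α ≤ β` say, replace `p` by
`p + j q`, which lowers `β` by `j α`: if `α ≤ 1` a suitable `j` brings `β` into `[1 - α, 1]` and
we are in the first case, and if `α > 1` the choice `j = 1` lowers `α + β` by more than `1`, so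
this Euclid-type descent terminates.
-/

lemma toR2_add (p q : ℤ × ℤ) : toR2 (p + q) = toR2 p + toR2 q := by
  simp [toR2]

lemma toR2_nsmul (j : ℕ) (p : ℤ × ℤ) : toR2 (j • p) = (j : ℝ) • toR2 p := by
  simp [toR2]

namespace FareyNeighbors

variable {p q : ℤ × ℤ}

lemma fareyPoint_right (h : FareyNeighbors p q) : FareyPoint q := by
  rw [FareyPoint, ← Int.isCoprime_iff_gcd_eq_one]
  rcases h.2.2 with h | h
  · exact ⟨-p.2, p.1, by linear_combination h⟩
  · exact ⟨p.2, -p.1, by linear_combination -h⟩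

lemma symm (h : FareyNeighbors p q) : FareyNeighbors q p := by
  obtain ⟨h1, h2, h3⟩ := h
  refine ⟨h1.imp And.symm And.symm, h2.imp And.symm And.symm, ?_⟩
  rcases h3 with h3 | h3
  · right; linear_combination -h3
  · left; linear_combination -h3

lemma fareyPoint_left (h : FareyNeighbors p q) : FareyPoint p :=
  h.symm.fareyPoint_right

lemma add_nsmul (h : FareyNeighbors p q) (j : ℕ) : FareyNeighbors p (q + j • p) := by
  obtain ⟨h1, h2, h3⟩ := h
  simp only [FareyNeighbors, Prod.fst_add, Prod.snd_add, Prod.smul_fst, Prod.smul_snd]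
  simp only [nsmul_eq_mul]
  refine ⟨?_, ?_, ?_⟩
  · rcases h1 with ⟨hp, hq⟩ | ⟨hp, hq⟩
    · exact Or.inl ⟨hp, by positivity⟩
    · exact Or.inr ⟨hp, by nlinarith [j.cast_nonneg (α := ℤ)]⟩
  · rcases h2 with ⟨hp, hq⟩ | ⟨hp, hq⟩
    · exact Or.inl ⟨hp, by positivity⟩
    · exact Or.inr ⟨hp, by nlinarith [j.cast_nonneg (α := ℤ)]⟩
  · rcases h3 with h3 | h3
    · left; linear_combination h3
    · right; linear_combination h3

lemma add_self (h : FareyNeighbors p q) : FareyNeighbors p (q + p) := by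
  simpa using h.add_nsmul 1

end FareyNeighbors

def InFareyTriangleOrRay (x : ℝ × ℝ) : Prop :=
  (∃ T : Set (ℝ × ℝ), IsFareyTriangle T ∧ x ∈ T) ∨ (∃ p : ℤ × ℤ, FareyPoint p ∧ x ∈ fareyRay p)

lemma smul_add_smul_add_smul_mem_convexHull {E : Type*} [AddCommGroup E] [Module ℝ E]
    {a b c : E} {s t u : ℝ} (hs : 0 ≤ s) (ht : 0 ≤ t) (hu : 0 ≤ u) (hstu : s + t + u = 1) :
    s • a + t • b + u • c ∈ convexHull ℝ {a, b, c} := by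
  have := (convex_convexHull ℝ {a, b, c}).sum_mem
    (t := Finset.univ) (w := ![s, t, u]) (z := ![a, b, c]) ?_ ?_ ?_
  · simpa [Fin.sum_univ_three] using this
  · intro i _; fin_cases i <;> simpa
  · simp [Fin.sum_univ_three, hstu]
  · intro i _
    fin_cases i <;> apply subset_convexHull <;> simp

lemma inFareyTriangleOrRay_of_le_one {p q : ℤ × ℤ} (hpq : FareyNeighbors p q) {α β : ℝ}
    (hα₁ : α ≤ 1) (hβ₁ : β ≤ 1) (hαβ : 1 ≤ α + β) :
    InFareyTriangleOrRay (α • toR2 p + β • toR2 q) := by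
  have hpm : FareyNeighbors p (q + p) := hpq.add_self
  have hqm : FareyNeighbors q (q + p) := by simpa [add_comm] using hpq.symm.add_self
  refine Or.inl ⟨_, ⟨p, q, q + p, hpq.fareyPoint_left, hpq.fareyPoint_right,
    hpm.fareyPoint_right, hpq, hpm, hqm, rfl⟩, ?_⟩
  have hx : α • toR2 p + β • toR2 q =
      (1 - β) • toR2 p + (1 - α) • toR2 q + (α + β - 1) • toR2 (q + p) := by
    rw [toR2_add]; module
  rw [hx]
  exact smul_add_smul_add_smul_mem_convexHull (by linarith) (by linarith) (by linarith)
    (by ring)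

lemma inFareyTriangleOrRay_of_le_one_lt {p q : ℤ × ℤ} (hpq : FareyNeighbors p q) {α β : ℝ}
    (hα₀ : 0 < α) (hα₁ : α ≤ 1) (hβ₁ : 1 < β) :
    InFareyTriangleOrRay (α • toR2 p + β • toR2 q) := by
  -- the least `j` with `β - j α ≤ 1`
  set j := ⌈(β - 1) / α⌉₊
  have hj_ge : β - 1 ≤ j * α := (div_le_iff₀ hα₀).1 (Nat.le_ceil _)
  have hj_lt : j * α < β - 1 + α := by
    have := Nat.ceil_lt_add_one (div_nonneg (by linarith : 0 ≤ β - 1) hα₀.le)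
    calc j * α < ((β - 1) / α + 1) * α := by gcongr
      _ = β - 1 + α := by field_simp
  have hx : α • toR2 p + β • toR2 q = α • toR2 (p + j • q) + (β - j * α) • toR2 q := by
    rw [toR2_add, toR2_nsmul]; module
  rw [hx]
  exact inFareyTriangleOrRay_of_le_one (hpq.symm.add_nsmul j).symm hα₁ (by linarith)
    (by linarith)

lemma inFareyTriangleOrRay_of_sum_le (n : ℕ) {p q : ℤ × ℤ} (hpq : FareyNeighbors p q) {α β : ℝ}
    (hα : 0 ≤ α) (hβ : 0 ≤ β) (hαβ : 1 ≤ α + β) (hn : α + β ≤ n) :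
    InFareyTriangleOrRay (α • toR2 p + β • toR2 q) := by
  induction n generalizing p q α β with
  | zero => push_cast at hn; linarith
  | succ n ih =>
    wlog hle : α ≤ β generalizing p q α β
    · rw [add_comm]
      exact this hpq.symm hβ hα (by linarith) (by linarith) (by linarith)
    rcases hα.eq_or_lt with rfl | hα₀
    · exact Or.inr ⟨q, hpq.fareyPoint_right, β, by linarith, by simp⟩
    by_cases hβ₁ : β ≤ 1
    · exact inFareyTriangleOrRay_of_le_one hpq (by linarith) hβ₁ hαβ
    by_cases hα₁ : α ≤ 1
    · exact inFareyTriangleOrRay_of_le_one_lt hpq hα₀ hα₁ (by linarith)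
    have hx : α • toR2 p + β • toR2 q = α • toR2 (p + q) + (β - α) • toR2 q := by
      rw [toR2_add]; module
    rw [hx]
    have hqp : FareyNeighbors (p + q) q := by simpa [add_comm] using hpq.symm.add_self.symm
    exact ih hqp hα (by linarith) (by linarith) (by push_cast at hn; linarith)

/-- Every point of `ℝ²` with second coordinate at least `1` lies in a Farey triangle
or in a Farey ray. -/
theorem statement11 (x : ℝ × ℝ) (h : 1 ≤ x.2) :
    (∃ T : Set (ℝ × ℝ), IsFareyTriangle T ∧ x ∈ T) ∨
    (∃ p : ℤ × ℤ, FareyPoint p ∧ x ∈ fareyRay p) := by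
  obtain ⟨e, hpq, hx⟩ : ∃ e : ℤ, FareyNeighbors (0, 1) (e, 0) ∧
      x = x.2 • toR2 (0, 1) + |x.1| • toR2 (e, 0) := by
    rcases le_total 0 x.1 with h₁ | h₁
    · refine ⟨1, by norm_num [FareyNeighbors], ?_⟩
      ext <;> simp [toR2, abs_of_nonneg h₁]
    · refine ⟨-1, by norm_num [FareyNeighbors], ?_⟩
      ext <;> simp [toR2, abs_of_nonpos h₁]
  rw [hx]
  exact inFareyTriangleOrRay_of_sum_le ⌈x.2 + |x.1|⌉₊ hpq (by linarith) (abs_nonneg _)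
    (by linarith [abs_nonneg x.1]) (Nat.le_ceil _)
end

section
/- Let x < y be real numbers with y irrational. Then there exists a Farey triangle with vertices (a,b), (c,d), (e,f) such that a > 0, c > 0, e ≥ 0, b/a < d/c, x < (b+d)/(a+c) < y, and moreover either e = 0, or both d/c < f/e and y < f/e. -/
open scoped BigOperators

/-!
Walk down the Stern–Brocot tree towards the irrational `y`, keeping unimodular fractions
`b/a < y < d/c`. Moving the right end to the mediant `(b + d)/(a + c)` as long as it stays above
`y` brings it arbitrarily close to `b/a < y`, so after finitely many such moves the mediant drops
below `y` and the left end moves up, increasing `a`. Since `y - b/a < 1/(ac) ≤ 1/a`, the left end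
eventually exceeds `x`; one more round of moves on the right makes the mediant fall below `y`.
Then `b/a`, `(b + d)/(a + c)`, `d/c` span the required Farey triangle, and the mediant of its
first two vertices lies strictly between `b/a > x` and `(b + d)/(a + c) < y`.
-/

lemma fareyPoint_of_det_eq_one {a b c d : ℤ} (h : a * d - b * c = 1) :
    FareyPoint (a, b) ∧ FareyPoint (c, d) :=
  ⟨Int.isCoprime_iff_gcd_eq_one.mp ⟨d, -c, by linear_combination h⟩,
    Int.isCoprime_iff_gcd_eq_one.mp ⟨-b, a, by linear_combination h⟩⟩

lemma fareyNeighbors_of_det_eq_one {a b c d : ℤ} (ha : 0 < a) (hc : 0 < c)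
    (h : a * d - b * c = 1) : FareyNeighbors (a, b) (c, d) := by
  refine ⟨Or.inl ⟨ha.le, hc.le⟩, ?_, Or.inl h⟩
  by_contra hsign
  simp only [not_or, not_and_or, not_le] at hsign
  rcases hsign with ⟨hb | hd, hb' | hd'⟩ <;> nlinarith

lemma div_lt_div_of_det_eq_one {a b c d : ℤ} (ha : 0 < a) (hc : 0 < c)
    (h : a * d - b * c = 1) : (b : ℝ) / a < d / c := by
  have hdet : (a : ℝ) * d - b * c = 1 := by exact_mod_cast h
  rw [div_lt_div_iff₀ (by exact_mod_cast ha) (by exact_mod_cast hc)]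
  linarith

structure FareyBracket (y : ℝ) (a b c d : ℤ) : Prop where
  left_pos : 0 < a
  right_pos : 0 < c
  det : a * d - b * c = 1
  left_lt : (b : ℝ) < a * y
  lt_right : (c : ℝ) * y < d

namespace FareyBracket

variable {y : ℝ} {a b c d : ℤ}

lemma floor (hy : Irrational y) : FareyBracket y 1 ⌊y⌋ 1 (⌊y⌋ + 1) where
  left_pos := one_pos
  right_pos := one_pos
  det := by ring
  left_lt := by
    rw [Int.cast_one, one_mul]
    exact (Int.floor_le y).lt_of_ne (hy.ne_int _).symm
  lt_right := by push_cast; linarith [Int.lt_floor_add_one y]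

lemma mul_sub_lt_one (h : FareyBracket y a b c d) : (c : ℝ) * (a * y - b) < 1 := by
  have hdet : (a : ℝ) * d - b * c = 1 := by exact_mod_cast h.det
  have ha : (0 : ℝ) < a := by exact_mod_cast h.left_pos
  nlinarith [mul_lt_mul_of_pos_left h.lt_right ha]

lemma mediant_ne (hy : Irrational y) (h : FareyBracket y a b c d) :
    ((a + c : ℤ) : ℝ) * y ≠ (b + d : ℤ) :=
  (hy.intCast_mul (by linarith [h.left_pos, h.right_pos])).ne_int _

lemma right_to_mediant (h : FareyBracket y a b c d) (hm : ((a + c : ℤ) : ℝ) * y < (b + d : ℤ)) :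
    FareyBracket y a b (a + c) (b + d) where
  left_pos := h.left_pos
  right_pos := by linarith [h.left_pos, h.right_pos]
  det := by linear_combination h.det
  left_lt := h.left_lt
  lt_right := hm

lemma left_to_mediant (h : FareyBracket y a b c d) (hm : ((b + d : ℤ) : ℝ) < (a + c : ℤ) * y) :
    FareyBracket y (a + c) (b + d) c d where
  left_pos := by linarith [h.left_pos, h.right_pos]
  right_pos := h.right_pos
  det := by linear_combination h.det
  left_lt := hm
  lt_right := h.lt_right

lemma exists_mediant_lt (hy : Irrational y) (h : FareyBracket y a b c d) :
    ∃ c' d' : ℤ, FareyBracket y a b c' d' ∧ ((b + d' : ℤ) : ℝ) < (a + c' : ℤ) * y := by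
  have hgap : (0 : ℝ) < a * y - b := sub_pos.mpr h.left_lt
  obtain ⟨N, hN⟩ := exists_nat_gt ((d - c * y) / (a * y - b))
  rw [div_lt_iff₀ hgap] at hN
  induction N generalizing c d with
  | zero => simp only [CharP.cast_eq_zero, zero_mul] at hN; linarith [h.lt_right]
  | succ N ih =>
    rcases (h.mediant_ne hy).lt_or_gt with hleft | hright
    · exact ih (h.right_to_mediant hleft) (by push_cast at hN ⊢; linarith)
    · exact ⟨c, d, h, hright⟩

lemma exists_le_left_den (hy : Irrational y) (k : ℕ) :
    ∃ a b c d : ℤ, FareyBracket y a b c d ∧ (k : ℤ) ≤ a := by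
  induction k with
  | zero => exact ⟨1, _, 1, _, floor hy, by norm_num⟩
  | succ k ih =>
    obtain ⟨a, b, c, d, h, hk⟩ := ih
    obtain ⟨c', d', h', hm⟩ := h.exists_mediant_lt hy
    exact ⟨_, _, _, _, h'.left_to_mediant hm, by push_cast; linarith [h'.right_pos]⟩

lemma exists_lt_left_mediant_lt {x : ℝ} (hxy : x < y) (hy : Irrational y) :
    ∃ a b c d : ℤ, FareyBracket y a b c d ∧ x * a < b ∧ ((b + d : ℤ) : ℝ) < (a + c : ℤ) * y := by
  obtain ⟨k, hk⟩ := exists_nat_gt (1 / (y - x))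
  obtain ⟨a, b, c, d, h, hka⟩ := exists_le_left_den hy k
  obtain ⟨c', d', h', hm⟩ := h.exists_mediant_lt hy
  refine ⟨a, b, c', d', h', ?_, hm⟩
  have hc : (1 : ℝ) ≤ c := by exact_mod_cast h.right_pos
  have hka : (k : ℝ) ≤ a := by exact_mod_cast hka
  rw [div_lt_iff₀ (sub_pos.mpr hxy)] at hk
  have hgap : (a : ℝ) * y - b < 1 := by nlinarith [h.mul_sub_lt_one, h.left_lt]
  nlinarith

end FareyBracket

/-- For real `x < y` with `y` irrational, there is a Farey triangle with vertices
`(a,b)`, `(c,d)`, `(e,f)` such that `a, c > 0`, `e ≥ 0`, `b/a < d/c`,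
`x < (b+d)/(a+c) < y`, and either `e = 0` or `d/c < f/e` and `y < f/e`. -/
theorem statement13 (x y : ℝ) (hxy : x < y) (hy : Irrational y) :
    ∃ a b c d e f : ℤ,
      FareyPoint (a, b) ∧ FareyPoint (c, d) ∧ FareyPoint (e, f) ∧
      FareyNeighbors (a, b) (c, d) ∧ FareyNeighbors (a, b) (e, f) ∧
      FareyNeighbors (c, d) (e, f) ∧
      0 < a ∧ 0 < c ∧ 0 ≤ e ∧
      (b : ℝ) / a < (d : ℝ) / c ∧
      x < ((b : ℝ) + d) / ((a : ℝ) + c) ∧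
      ((b : ℝ) + d) / ((a : ℝ) + c) < y ∧
      (e = 0 ∨ ((d : ℝ) / c < (f : ℝ) / e ∧ y < (f : ℝ) / e)) := by
  obtain ⟨a, b, c, d, h, hx, hm⟩ := FareyBracket.exists_lt_left_mediant_lt hxy hy
  have ha := h.left_pos
  have hc := h.right_pos
  have hac : 0 < a + c := by omega
  have hdet := h.det
  have hdet_left : a * (b + d) - b * (a + c) = 1 := by linear_combination hdet
  have hdet_right : (a + c) * d - (b + d) * c = 1 := by linear_combination hdet
  have hx' : x < (b : ℝ) / a := (lt_div_iff₀ (by exact_mod_cast ha)).mpr hx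
  have hm' : ((b + d : ℤ) : ℝ) / (a + c : ℤ) < y :=
    (div_lt_iff₀' (by exact_mod_cast hac)).mpr hm
  have hmediant_gt := div_lt_div_of_det_eq_one ha (by omega : 0 < a + (a + c))
    (by linear_combination hdet : a * (b + (b + d)) - b * (a + (a + c)) = 1)
  have hmediant_lt := div_lt_div_of_det_eq_one (by omega : 0 < a + (a + c)) hac
    (by linear_combination hdet : (a + (a + c)) * (b + d) - (b + (b + d)) * (a + c) = 1)
  refine ⟨a, b, a + c, b + d, c, d, (fareyPoint_of_det_eq_one hdet_left).1,
    (fareyPoint_of_det_eq_one hdet_left).2, (fareyPoint_of_det_eq_one hdet).2,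
    fareyNeighbors_of_det_eq_one ha hac hdet_left, fareyNeighbors_of_det_eq_one ha hc hdet,
    fareyNeighbors_of_det_eq_one hac hc hdet_right, ha, hac, hc.le,
    div_lt_div_of_det_eq_one ha hac hdet_left, ?_, ?_,
    Or.inr ⟨div_lt_div_of_det_eq_one hac hc hdet_right, ?_⟩⟩
  · push_cast at hmediant_gt ⊢; linarith
  · push_cast at hmediant_lt hm' ⊢; linarith
  · exact (lt_div_iff₀' (by exact_mod_cast hc)).mpr h.lt_right
end

section
/- Let B be the 3×3 integer matrix with rows (0,2,−2), (−2,0,2), (2,−2,0), and let k be the sequence (2,1), so that η_k^B = η_2^{μ_1(B)} ∘ η_1^B. Then η_k^B(1,−1,0) = (1,−1,0), and for every j ∈ ℤ the image of D_j under η_k^B is D_{j+2}. -/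
/-!
Since `μ₁(B) = -B`, the map `η = η₂^{-B} ∘ η₁^B` is a composition of two maps that are each
linear on either side of a coordinate hyperplane; hence `η` is linear on each of the four cones
cut out by the signs of `a₁` and of `a₂ + 2a₁` (when `a₁ ≥ 0`) or `a₂` (when `a₁ ≤ 0`). Every
`D_j` lies in one of them, and the linear map there sends the generators of `D_j` to those of
`D_{j+2}`. The paper's indices `1, 2, 3` are `0, 1, 2 : Fin 3`.
-/

open scoped BigOperators

/-- The set of nonnegative linear combinations of two vectors. -/
def cone2 (u w : Fin 3 → ℝ) : Set (Fin 3 → ℝ) :=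
  {x | ∃ s t : ℝ, 0 ≤ s ∧ 0 ≤ t ∧ x = s • u + t • w}

/-- The cones `D_j` for `j : ℤ`. -/
noncomputable def Dcone (j : ℤ) : Set (Fin 3 → ℝ) :=
  if j = 0 then cone2 ![-1, 0, 1] ![0, 1, -1]
  else if 0 < j then
    cone2 ![(j : ℝ) - 1, -(j : ℝ) + 2, -1] ![(j : ℝ), -(j : ℝ) + 1, -1]
  else cone2 ![-(j : ℝ) - 2, (j : ℝ) + 1, 1] ![-(j : ℝ) - 1, (j : ℝ), 1]

section etaMap

variable (C : Matrix (Fin 3) (Fin 3) ℤ) {k : Fin 3} {a : Fin 3 → ℝ}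

lemma etaMap_self : etaMap C k a k = -a k := by simp [etaMap]

lemma etaMap_of_nonneg (ha : 0 ≤ a k) {j : Fin 3} (hj : j ≠ k) :
    etaMap C k a j = a j + a k * max (C k j : ℝ) 0 := by
  obtain ha | ha := ha.eq_or_lt
  · simp [etaMap, hj, ← ha]
  simp only [etaMap, if_neg hj, ← Int.cast_nonneg_iff (R := ℝ), ← Int.cast_nonpos (R := ℝ)]
  split_ifs <;> grind

lemma etaMap_of_nonpos (ha : a k ≤ 0) {j : Fin 3} (hj : j ≠ k) :
    etaMap C k a j = a j - a k * min (C k j : ℝ) 0 := by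
  obtain ha | ha := ha.eq_or_lt
  · simp [etaMap, hj, ha]
  simp only [etaMap, if_neg hj, ← Int.cast_nonneg_iff (R := ℝ), ← Int.cast_nonpos (R := ℝ)]
  split_ifs <;> grind

end etaMap

lemma matMut_zero_Bmat : matMut 0 Bmat = -Bmat := by decide

lemma etaList_Bmat_zero_one (a : Fin 3 → ℝ) :
    etaList Bmat [0, 1] a = etaMap (-Bmat) 1 (etaMap Bmat 0 a) := by
  simp [etaList, matMut_zero_Bmat]

section mutationSteps

variable {x y z : ℝ}

lemma etaMap_Bmat_zero_of_nonneg (h : 0 ≤ x) :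
    etaMap Bmat 0 ![x, y, z] = ![-x, y + 2 * x, z] := by
  have h' : 0 ≤ ![x, y, z] 0 := h
  ext j; fin_cases j <;> simp [etaMap_self, etaMap_of_nonneg _ h', Bmat, mul_comm]

lemma etaMap_Bmat_zero_of_nonpos (h : x ≤ 0) :
    etaMap Bmat 0 ![x, y, z] = ![-x, y, z + 2 * x] := by
  have h' : ![x, y, z] 0 ≤ 0 := h
  ext j; fin_cases j <;> simp [etaMap_self, etaMap_of_nonpos _ h', Bmat, mul_comm]

lemma etaMap_neg_Bmat_one_of_nonneg (h : 0 ≤ y) :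
    etaMap (-Bmat) 1 ![x, y, z] = ![x + 2 * y, -y, z] := by
  have h' : 0 ≤ ![x, y, z] 1 := h
  ext j; fin_cases j <;> simp [etaMap_self, etaMap_of_nonneg _ h', Bmat, mul_comm]

lemma etaMap_neg_Bmat_one_of_nonpos (h : y ≤ 0) :
    etaMap (-Bmat) 1 ![x, y, z] = ![x, -y, z + 2 * y] := by
  have h' : ![x, y, z] 1 ≤ 0 := h
  ext j; fin_cases j <;> simp [etaMap_self, etaMap_of_nonpos _ h', Bmat, mul_comm]

end mutationSteps

section linearityDomains

variable {x y z : ℝ}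

lemma etaList_Bmat_of_nonneg_of_nonneg (h₀ : 0 ≤ x) (h₁ : 0 ≤ y + 2 * x) :
    etaList Bmat [0, 1] ![x, y, z] = ![3 * x + 2 * y, -(y + 2 * x), z] := by
  rw [etaList_Bmat_zero_one, etaMap_Bmat_zero_of_nonneg h₀, etaMap_neg_Bmat_one_of_nonneg h₁]
  congr 1
  ring

lemma etaList_Bmat_of_nonneg_of_nonpos (h₀ : 0 ≤ x) (h₁ : y + 2 * x ≤ 0) :
    etaList Bmat [0, 1] ![x, y, z] = ![-x, -(y + 2 * x), z + 2 * (y + 2 * x)] := by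
  rw [etaList_Bmat_zero_one, etaMap_Bmat_zero_of_nonneg h₀, etaMap_neg_Bmat_one_of_nonpos h₁]

lemma etaList_Bmat_of_nonpos_of_nonneg (h₀ : x ≤ 0) (h₁ : 0 ≤ y) :
    etaList Bmat [0, 1] ![x, y, z] = ![-x + 2 * y, -y, z + 2 * x] := by
  rw [etaList_Bmat_zero_one, etaMap_Bmat_zero_of_nonpos h₀, etaMap_neg_Bmat_one_of_nonneg h₁]

lemma etaList_Bmat_of_nonpos_of_nonpos (h₀ : x ≤ 0) (h₁ : y ≤ 0) :
    etaList Bmat [0, 1] ![x, y, z] = ![-x, -y, z + 2 * x + 2 * y] := by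
  rw [etaList_Bmat_zero_one, etaMap_Bmat_zero_of_nonpos h₀, etaMap_neg_Bmat_one_of_nonpos h₁]

end linearityDomains

lemma smul_vec3_add_smul_vec3 (s t x₀ x₁ x₂ y₀ y₁ y₂ : ℝ) :
    s • ![x₀, x₁, x₂] + t • ![y₀, y₁, y₂] =
      ![s * x₀ + t * y₀, s * x₁ + t * y₁, s * x₂ + t * y₂] := by
  ext i; fin_cases i <;> simp

lemma image_cone2 {f : (Fin 3 → ℝ) → Fin 3 → ℝ} {u w u' w' : Fin 3 → ℝ}
    (h : ∀ s t : ℝ, 0 ≤ s → 0 ≤ t → f (s • u + t • w) = s • u' + t • w') :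
    f '' cone2 u w = cone2 u' w' := by
  ext x
  constructor
  · rintro ⟨y, ⟨s, t, hs, ht, rfl⟩, rfl⟩
    exact ⟨s, t, hs, ht, h s t hs ht⟩
  · rintro ⟨s, t, hs, ht, rfl⟩
    exact ⟨s • u + t • w, ⟨s, t, hs, ht, rfl⟩, h s t hs ht⟩

lemma cone2_comm (u w : Fin 3 → ℝ) : cone2 u w = cone2 w u := by
  ext x
  constructor <;> rintro ⟨s, t, hs, ht, rfl⟩ <;> exact ⟨t, s, ht, hs, add_comm _ _⟩

lemma Dcone_of_pos {j : ℤ} (hj : 0 < j) :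
    Dcone j = cone2 ![(j : ℝ) - 1, -(j : ℝ) + 2, -1] ![(j : ℝ), -(j : ℝ) + 1, -1] := by
  rw [Dcone, if_neg hj.ne', if_pos hj]

lemma Dcone_of_neg {j : ℤ} (hj : j < 0) :
    Dcone j = cone2 ![-(j : ℝ) - 2, (j : ℝ) + 1, 1] ![-(j : ℝ) - 1, (j : ℝ), 1] := by
  rw [Dcone, if_neg hj.ne, if_neg hj.not_gt]

lemma image_Dcone_of_pos {j : ℤ} (hj : 0 < j) :
    etaList Bmat [0, 1] '' Dcone j = Dcone (j + 2) := by
  have hj' : (1 : ℝ) ≤ j := by exact_mod_cast hj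
  rw [Dcone_of_pos hj, Dcone_of_pos (by omega)]
  refine image_cone2 fun s t hs ht => ?_
  simp only [smul_vec3_add_smul_vec3]
  rw [etaList_Bmat_of_nonneg_of_nonneg (by nlinarith) (by nlinarith)]
  push_cast
  ring_nf

lemma image_Dcone_of_le_neg_three {j : ℤ} (hj : j ≤ -3) :
    etaList Bmat [0, 1] '' Dcone j = Dcone (j + 2) := by
  have hj' : (j : ℝ) ≤ -3 := by exact_mod_cast hj
  rw [Dcone_of_neg (by omega), Dcone_of_neg (by omega)]
  refine image_cone2 fun s t hs ht => ?_
  simp only [smul_vec3_add_smul_vec3]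
  rw [etaList_Bmat_of_nonneg_of_nonneg (by nlinarith) (by nlinarith)]
  push_cast
  ring_nf

lemma image_Dcone_neg_two : etaList Bmat [0, 1] '' Dcone (-2) = Dcone 0 := by
  norm_num [Dcone]
  rw [cone2_comm]
  refine image_cone2 fun s t hs ht => ?_
  simp only [smul_vec3_add_smul_vec3]
  rw [etaList_Bmat_of_nonneg_of_nonpos (by linarith) (by linarith)]
  ring_nf

lemma image_Dcone_neg_one : etaList Bmat [0, 1] '' Dcone (-1) = Dcone 1 := by
  norm_num [Dcone]
  rw [cone2_comm]
  refine image_cone2 fun s t hs ht => ?_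
  simp only [smul_vec3_add_smul_vec3]
  rw [etaList_Bmat_of_nonpos_of_nonpos (by linarith) (by linarith)]
  ring_nf

lemma image_Dcone_zero : etaList Bmat [0, 1] '' Dcone 0 = Dcone 2 := by
  norm_num [Dcone]
  refine image_cone2 fun s t hs ht => ?_
  simp only [smul_vec3_add_smul_vec3]
  rw [etaList_Bmat_of_nonpos_of_nonneg (by linarith) (by linarith)]
  ring_nf

/-- `η^B_{2,1}` fixes `(1,-1,0)` and takes `D_j` to `D_{j+2}` (indices `1, 2`
correspond to `0, 1 : Fin 3`). -/
theorem statement16 :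
    etaList Bmat [0, 1] ![(1 : ℝ), -1, 0] = ![(1 : ℝ), -1, 0] ∧
    ∀ j : ℤ, etaList Bmat [0, 1] '' Dcone j = Dcone (j + 2) := by
  refine ⟨?_, fun j => ?_⟩
  · rw [etaList_Bmat_of_nonneg_of_nonneg (by norm_num) (by norm_num)]
    norm_num
  obtain hj | hj | rfl | rfl | rfl := (by omega : 0 < j ∨ j ≤ -3 ∨ j = -2 ∨ j = -1 ∨ j = 0)
  · exact image_Dcone_of_pos hj
  · exact image_Dcone_of_le_neg_three hj
  · exact image_Dcone_neg_two
  · exact image_Dcone_neg_one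
  · exact image_Dcone_zero
end
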